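/- arXiv:2112.07594 — 7 statements merged into one kernel-verified Lean document; each statement's English description precedes it below -/
import Mathlib

section
/- Let L be a finite slim lattice with Jir(L) = U ∪ V for chains U and V. For x ∈ L write u(x) for the largest element of U∪{0} below x and v(x) for the largest element of V∪{0} below x. Then for all x, y ∈ L: x ≤ y if and only if u(x) ≤ u(y) and v(x) ≤ v(y). -/
/-! Every join-irreducible below `x` lies in `U` or in `V`, hence below `u x` or `v x`; since `x` is
the join of the join-irreducibles below it, `x = u x ⊔ v x`. The maps `u` and `v` are monotone, as
they pick greatest elements below their argument, and the equivalence follows. -/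

theorem le_of_forall_supIrred_le {α : Type*} [SemilatticeSup α] [OrderBot α] [WellFoundedLT α]
    {x y : α} (h : ∀ a, SupIrred a → a ≤ x → a ≤ y) : x ≤ y := by
  obtain ⟨s, rfl, hs⟩ := exists_supIrred_decomposition x
  exact Finset.sup_le fun b hb => h b (hs hb) (Finset.le_sup (f := id) hb)

theorem le_sup_of_supIrred_subset_union {α : Type*} [SemilatticeSup α] [OrderBot α]
    [WellFoundedLT α] {U V : Set α} (hJ : {a | SupIrred a} ⊆ U ∪ V) {u v : α → α}
    (hu : ∀ x, ∀ w ∈ U, w ≤ x → w ≤ u x) (hv : ∀ x, ∀ w ∈ V, w ≤ x → w ≤ v x) (x : α) :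
    x ≤ u x ⊔ v x :=
  le_of_forall_supIrred_le fun a ha hax => (hJ ha).elim
    (fun haU => le_sup_of_le_left (hu x a haU hax))
    (fun haV => le_sup_of_le_right (hv x a haV hax))

theorem monotone_of_forall_greatest_below {α : Type*} [Preorder α] {S : Set α} {f : α → α}
    (hf : ∀ x, f x ∈ S ∧ f x ≤ x ∧ ∀ w ∈ S, w ≤ x → w ≤ f x) : Monotone f :=
  fun x _ hxy => (hf _).2.2 _ (hf x).1 ((hf x).2.1.trans hxy)

theorem stmt_1_general {L : Type*} [Lattice L] [Fintype L] [OrderBot L] (U V : Set L)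
    (hJ : {a : L | SupIrred a} = U ∪ V)
    (u v : L → L)
    (hu : ∀ x : L, u x ∈ insert (⊥ : L) U ∧ u x ≤ x ∧
      ∀ w ∈ insert (⊥ : L) U, w ≤ x → w ≤ u x)
    (hv : ∀ x : L, v x ∈ insert (⊥ : L) V ∧ v x ≤ x ∧
      ∀ w ∈ insert (⊥ : L) V, w ≤ x → w ≤ v x) :
    ∀ x y : L, x ≤ y ↔ (u x ≤ u y ∧ v x ≤ v y) := by
  intro x y
  refine ⟨fun hxy => ⟨monotone_of_forall_greatest_below hu hxy,
    monotone_of_forall_greatest_below hv hxy⟩, fun ⟨hux, hvx⟩ => ?_⟩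
  calc x ≤ u x ⊔ v x :=
        le_sup_of_supIrred_subset_union hJ.subset
          (fun x w hw => (hu x).2.2 w (Set.mem_insert_of_mem _ hw))
          (fun x w hw => (hv x).2.2 w (Set.mem_insert_of_mem _ hw)) x
    _ ≤ u y ⊔ v y := sup_le_sup hux hvx
    _ ≤ y := sup_le (hu y).2.1 (hv y).2.1

/-- In a finite slim lattice (with `Jir L = U ∪ V`, `U`, `V` disjoint chains),
with `u x` (resp. `v x`) the largest element of `U ∪ {⊥}` (resp. `V ∪ {⊥}`) below `x`,
we have `x ≤ y ↔ u x ≤ u y ∧ v x ≤ v y`. -/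
theorem stmt_1 {L : Type*} [Lattice L] [Fintype L] [OrderBot L] (U V : Set L)
    (hU : IsChain (· ≤ ·) U) (hV : IsChain (· ≤ ·) V) (hUV : Disjoint U V)
    (hJ : {a : L | SupIrred a} = U ∪ V)
    (u v : L → L)
    (hu : ∀ x : L, u x ∈ insert (⊥ : L) U ∧ u x ≤ x ∧
      ∀ w ∈ insert (⊥ : L) U, w ≤ x → w ≤ u x)
    (hv : ∀ x : L, v x ∈ insert (⊥ : L) V ∧ v x ≤ x ∧
      ∀ w ∈ insert (⊥ : L) V, w ≤ x → w ≤ v x) :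
    ∀ x y : L, x ≤ y ↔ (u x ≤ u y ∧ v x ≤ v y) :=
  stmt_1_general U V hJ u v hu hv
end

section
/- Let L be a finite slim lattice with Jir(L) = U ∪ V for chains U, V. With u(x), v(x) as the largest elements of U∪{0} and V∪{0} below x, for all x, y ∈ L one has u(x ∧ y) = min(u(x), u(y)) and v(x ∧ y) = min(v(x), v(y)), where min is taken in the chains U∪{0} and V∪{0}. -/
/-!
Both claims are instances of one fact about a chain `C` in a lattice: the greatest element of `C`
below `x ⊓ y` is the meet of the greatest elements `a`, `b` of `C` below `x` and below `y`. Since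
`C` is a chain, `a ⊓ b` is one of `a`, `b`, hence lies in `C`; it is below `x ⊓ y`, and every
element of `C` below `x ⊓ y` is below both `a` and `b`. Adding `⊥` to `U` or `V` keeps it a chain.
-/

theorem IsChain.isGreatest_inf {L : Type*} [Lattice L] {C : Set L} (hC : IsChain (· ≤ ·) C)
    {x y a b : L} (ha : IsGreatest {w ∈ C | w ≤ x} a) (hb : IsGreatest {w ∈ C | w ≤ y} b) :
    IsGreatest {w ∈ C | w ≤ x ⊓ y} (a ⊓ b) := by
  obtain ⟨⟨haC, hax⟩, ha_max⟩ := ha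
  obtain ⟨⟨hbC, hby⟩, hb_max⟩ := hb
  have hab_mem : a ⊓ b ∈ C := by
    rcases hC.total haC hbC with h | h
    · rwa [inf_eq_left.2 h]
    · rwa [inf_eq_right.2 h]
  refine ⟨⟨hab_mem, inf_le_inf hax hby⟩, fun w ⟨hwC, hw⟩ => le_inf ?_ ?_⟩
  · exact ha_max ⟨hwC, hw.trans inf_le_left⟩
  · exact hb_max ⟨hwC, hw.trans inf_le_right⟩

theorem IsChain.floor_inf {L : Type*} [Lattice L] [OrderBot L] {C : Set L}
    (hC : IsChain (· ≤ ·) C) {c : L → L}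
    (hc : ∀ x : L, c x ∈ insert (⊥ : L) C ∧ c x ≤ x ∧
      ∀ w ∈ insert (⊥ : L) C, w ≤ x → w ≤ c x) (x y : L) :
    c (x ⊓ y) = c x ⊓ c y := by
  have hC_bot : IsChain (· ≤ ·) (insert (⊥ : L) C) := hC.insert fun _ _ _ => Or.inl bot_le
  have hc_greatest (z : L) : IsGreatest {w ∈ insert ⊥ C | w ≤ z} (c z) :=
    ⟨⟨(hc z).1, (hc z).2.1⟩, fun w ⟨hwC, hw⟩ => (hc z).2.2 w hwC hw⟩
  exact (hc_greatest (x ⊓ y)).unique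
    (hC_bot.isGreatest_inf (hc_greatest x) (hc_greatest y))

theorem stmt_2_general {L : Type*} [Lattice L] [OrderBot L] (U V : Set L)
    (hU : IsChain (· ≤ ·) U) (hV : IsChain (· ≤ ·) V)
    (u v : L → L)
    (hu : ∀ x : L, u x ∈ insert (⊥ : L) U ∧ u x ≤ x ∧
      ∀ w ∈ insert (⊥ : L) U, w ≤ x → w ≤ u x)
    (hv : ∀ x : L, v x ∈ insert (⊥ : L) V ∧ v x ≤ x ∧
      ∀ w ∈ insert (⊥ : L) V, w ≤ x → w ≤ v x) :
    ∀ x y : L, u (x ⊓ y) = u x ⊓ u y ∧ v (x ⊓ y) = v x ⊓ v y :=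
  fun x y => ⟨hU.floor_inf hu x y, hV.floor_inf hv x y⟩

/-- In a finite slim lattice, `u (x ⊓ y) = min (u x) (u y)` and `v (x ⊓ y) = min (v x) (v y)`,
the minima being taken in the chains `U ∪ {⊥}` and `V ∪ {⊥}`; since the relevant elements are
comparable, these minima coincide with the lattice meets. -/
theorem stmt_2 {L : Type*} [Lattice L] [Fintype L] [OrderBot L] (U V : Set L)
    (hU : IsChain (· ≤ ·) U) (hV : IsChain (· ≤ ·) V)
    (hJ : {a : L | SupIrred a} = U ∪ V)
    (u v : L → L)
    (hu : ∀ x : L, u x ∈ insert (⊥ : L) U ∧ u x ≤ x ∧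
      ∀ w ∈ insert (⊥ : L) U, w ≤ x → w ≤ u x)
    (hv : ∀ x : L, v x ∈ insert (⊥ : L) V ∧ v x ≤ x ∧
      ∀ w ∈ insert (⊥ : L) V, w ≤ x → w ≤ v x) :
    ∀ x y : L, u (x ⊓ y) = u x ⊓ u y ∧ v (x ⊓ y) = v x ⊓ v y :=
  stmt_2_general U V hU hV u v hu hv
end

section
/- Let L be a finite slim lattice and let a, b ∈ L be incomparable. Then the intervals [a∧b, a] and [a∧b, b] are chains. -/
/-! If `x, y ∈ [a ⊓ b, a]` were incomparable, choose join-irreducibles `p ≤ x` with `p ≰ y`,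
`q ≤ y` with `q ≰ x`, and `r ≤ b` with `r ≰ a`. Since `a ⊓ b` lies below both `x` and `y`,
neither `p` nor `q` is below `b`, so `p, q, r` are pairwise incomparable. By pigeonhole two of
them lie in the same one of the two chains covering the join-irreducibles. -/

theorem exists_supIrred_le_not_le {L : Type*} [Lattice L] [OrderBot L] [WellFoundedLT L]
    {x y : L} (h : ¬ x ≤ y) : ∃ p, SupIrred p ∧ p ≤ x ∧ ¬ p ≤ y := by
  obtain ⟨s, rfl, hs⟩ := exists_supIrred_decomposition x
  obtain ⟨p, hp, hpy⟩ : ∃ p ∈ s, ¬ p ≤ y := by simpa [Finset.sup_le_iff] using h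
  exact ⟨p, hs hp, Finset.le_sup (f := id) hp, hpy⟩

theorem IsChain.comparable_of_mem_union {α : Type*} [Preorder α] {U V : Set α}
    (hU : IsChain (· ≤ ·) U) (hV : IsChain (· ≤ ·) V) {p q r : α}
    (hp : p ∈ U ∪ V) (hq : q ∈ U ∪ V) (hr : r ∈ U ∪ V) :
    Relation.SymmGen (· ≤ ·) p q ∨ Relation.SymmGen (· ≤ ·) p r ∨
      Relation.SymmGen (· ≤ ·) q r := by
  rcases hp with hp | hp <;> rcases hq with hq | hq <;> rcases hr with hr | hr <;>
    first
    | exact Or.inl (hU.total hp hq) | exact Or.inl (hV.total hp hq)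
    | exact Or.inr (Or.inl (hU.total hp hr)) | exact Or.inr (Or.inl (hV.total hp hr))
    | exact Or.inr (Or.inr (hU.total hq hr)) | exact Or.inr (Or.inr (hV.total hq hr))

theorem isChain_Icc_inf_left_of_slim {L : Type*} [Lattice L] [Fintype L] [OrderBot L]
    {U V : Set L} (hU : IsChain (· ≤ ·) U) (hV : IsChain (· ≤ ·) V)
    (hJ : {a : L | SupIrred a} = U ∪ V) {a b : L} (hba : ¬ b ≤ a) :
    IsChain (· ≤ ·) (Set.Icc (a ⊓ b) a) := by
  intro x hx y hy _
  by_contra! hxy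
  obtain ⟨p, hpJ, hpx, hpy⟩ := exists_supIrred_le_not_le hxy.1
  obtain ⟨q, hqJ, hqy, hqx⟩ := exists_supIrred_le_not_le hxy.2
  obtain ⟨r, hrJ, hrb, hra⟩ := exists_supIrred_le_not_le hba
  have hpa : p ≤ a := hpx.trans hx.2
  have hqa : q ≤ a := hqy.trans hy.2
  have hpb : ¬ p ≤ b := fun h => hpy ((le_inf hpa h).trans hy.1)
  have hqb : ¬ q ≤ b := fun h => hqx ((le_inf hqa h).trans hx.1)
  have mem_union : ∀ {z : L}, SupIrred z → z ∈ U ∪ V := fun hz => hJ ▸ hz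
  rcases hU.comparable_of_mem_union hV (mem_union hpJ) (mem_union hqJ) (mem_union hrJ) with
    hpq | hpr | hqr
  · exact hpq.elim (fun h => hpy (h.trans hqy)) fun h => hqx (h.trans hpx)
  · exact hpr.elim (fun h => hpb (h.trans hrb)) fun h => hra (h.trans hpa)
  · exact hqr.elim (fun h => hqb (h.trans hrb)) fun h => hra (h.trans hqa)

/-- In a finite slim lattice, if `a` and `b` are incomparable, then the intervals
`[a ⊓ b, a]` and `[a ⊓ b, b]` are chains. -/
theorem stmt_3 {L : Type*} [Lattice L] [Fintype L] [OrderBot L] (U V : Set L)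
    (hU : IsChain (· ≤ ·) U) (hV : IsChain (· ≤ ·) V)
    (hJ : {a : L | SupIrred a} = U ∪ V)
    (a b : L) (hab : ¬ a ≤ b) (hba : ¬ b ≤ a) :
    IsChain (· ≤ ·) (Set.Icc (a ⊓ b) a) ∧ IsChain (· ≤ ·) (Set.Icc (a ⊓ b) b) :=
  ⟨isChain_Icc_inf_left_of_slim hU hV hJ hba,
    inf_comm b a ▸ isChain_Icc_inf_left_of_slim hU hV hJ hab⟩
end

section
/- Let L be a finite slim lattice and let a, b ∈ L be incomparable with c = a ∧ b. If u(a) < u(b) in the chain U∪{0}, then v(b) < v(a), and moreover every element x of the interval [c, a] satisfies u(x) = u(a). -/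
/-! Every element of a finite lattice is the join of the join-irreducibles below it, and each of
those lies under `u x` or under `v x`; hence `x = u x ⊔ v x`, and `x ≤ y` as soon as `u x ≤ u y`
and `v x ≤ v y`. Since `a ≰ b` while `u a ≤ u b`, the chain `V ∪ {⊥}` forces `v b < v a`. On
`[c, a]` the map `u` is squeezed: `u a ≤ a ⊓ b = c ≤ x ≤ a` gives `u a ≤ u x ≤ u a`. -/

def IsLargestBelowIn {L : Type*} [LE L] (S : Set L) (f : L → L) : Prop :=
  ∀ x, f x ∈ S ∧ f x ≤ x ∧ ∀ w ∈ S, w ≤ x → w ≤ f x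

namespace IsLargestBelowIn

variable {L : Type*}

lemma monotone [Preorder L] {S : Set L} {f : L → L} (hf : IsLargestBelowIn S f) :
    Monotone f := fun x y hxy =>
  (hf y).2.2 _ (hf x).1 ((hf x).2.1.trans hxy)

lemma apply_eq_of_le_of_le [PartialOrder L] {S : Set L} {f : L → L}
    (hf : IsLargestBelowIn S f) {x y : L} (hyx : f y ≤ x) (hxy : x ≤ y) : f x = f y :=
  le_antisymm (hf.monotone hxy) ((hf x).2.2 _ (hf y).1 hyx)

end IsLargestBelowIn

section SlimLattice

variable {L : Type*} [Lattice L] [OrderBot L] [Finite L]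

lemma le_of_forall_supIrred_le_s4 {x y : L} (h : ∀ j, SupIrred j → j ≤ x → j ≤ y) : x ≤ y := by
  have : WellFoundedLT L := Finite.to_wellFoundedLT
  obtain ⟨s, rfl, hs⟩ := exists_supIrred_decomposition x
  exact Finset.sup_le fun j hj => h j (hs hj) (Finset.le_sup (f := id) hj)

variable {U V : Set L} {u v : L → L}

lemma le_sup_of_supIrred_subset (hJ : {a : L | SupIrred a} ⊆ U ∪ V)
    (hu : IsLargestBelowIn (insert ⊥ U) u) (hv : IsLargestBelowIn (insert ⊥ V) v) (x : L) :
    x ≤ u x ⊔ v x := by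
  refine le_of_forall_supIrred_le_s4 fun j hj hjx => ?_
  rcases hJ hj with hjU | hjV
  · exact le_sup_of_le_left ((hu x).2.2 j (Set.mem_insert_of_mem _ hjU) hjx)
  · exact le_sup_of_le_right ((hv x).2.2 j (Set.mem_insert_of_mem _ hjV) hjx)

lemma le_of_apply_le_apply_of_supIrred_subset (hJ : {a : L | SupIrred a} ⊆ U ∪ V)
    (hu : IsLargestBelowIn (insert ⊥ U) u) (hv : IsLargestBelowIn (insert ⊥ V) v) {x y : L}
    (hux : u x ≤ u y) (hvx : v x ≤ v y) : x ≤ y :=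
  calc x ≤ u x ⊔ v x := le_sup_of_supIrred_subset hJ hu hv x
    _ ≤ u y ⊔ v y := sup_le_sup hux hvx
    _ ≤ y := sup_le (hu y).2.1 (hv y).2.1

end SlimLattice

theorem stmt_4_general {L : Type*} [Lattice L] [Fintype L] [OrderBot L] (U V : Set L)
    (hV : IsChain (· ≤ ·) V)
    (hJ : {a : L | SupIrred a} = U ∪ V)
    (u v : L → L)
    (hu : ∀ x : L, u x ∈ insert (⊥ : L) U ∧ u x ≤ x ∧
      ∀ w ∈ insert (⊥ : L) U, w ≤ x → w ≤ u x)
    (hv : ∀ x : L, v x ∈ insert (⊥ : L) V ∧ v x ≤ x ∧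
      ∀ w ∈ insert (⊥ : L) V, w ≤ x → w ≤ v x)
    (a b : L) (hab : ¬ a ≤ b) (c : L) (hc : c = a ⊓ b)
    (huab : u a < u b) :
    v b < v a ∧ ∀ x ∈ Set.Icc c a, u x = u a := by
  have hv_not_le : ¬ v a ≤ v b := fun h =>
    hab (le_of_apply_le_apply_of_supIrred_subset hJ.subset hu hv huab.le h)
  have hVbot : IsChain (· ≤ ·) (insert ⊥ V) := hV.insert fun _ _ _ => Or.inl bot_le
  have hv_le : v b ≤ v a := (hVbot.total (hv a).1 (hv b).1).resolve_left hv_not_le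
  have hua_le_c : u a ≤ c := hc ▸ le_inf (hu a).2.1 (huab.le.trans (hu b).2.1)
  exact ⟨hv_le.lt_of_not_ge hv_not_le, fun x hx =>
    IsLargestBelowIn.apply_eq_of_le_of_le hu (hua_le_c.trans hx.1) hx.2⟩

/-- In a finite slim lattice (disjoint chains `U`, `V`), if `a ∥ b`, `c = a ⊓ b` and
`u a < u b`, then `v b < v a` and every `x ∈ [c, a]` satisfies `u x = u a`. -/
theorem stmt_4 {L : Type*} [Lattice L] [Fintype L] [OrderBot L] (U V : Set L)
    (hU : IsChain (· ≤ ·) U) (hV : IsChain (· ≤ ·) V) (hUV : Disjoint U V)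
    (hJ : {a : L | SupIrred a} = U ∪ V)
    (u v : L → L)
    (hu : ∀ x : L, u x ∈ insert (⊥ : L) U ∧ u x ≤ x ∧
      ∀ w ∈ insert (⊥ : L) U, w ≤ x → w ≤ u x)
    (hv : ∀ x : L, v x ∈ insert (⊥ : L) V ∧ v x ≤ x ∧
      ∀ w ∈ insert (⊥ : L) V, w ≤ x → w ≤ v x)
    (a b : L) (hab : ¬ a ≤ b) (hba : ¬ b ≤ a) (c : L) (hc : c = a ⊓ b)
    (huab : u a < u b) :
    v b < v a ∧ ∀ x ∈ Set.Icc c a, u x = u a :=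
  stmt_4_general U V hV hJ u v hu hv a b hab c hc huab
end

section
/- A finite slim lattice admits an order-embedding into the direct product of two finite chains that preserves meets. -/
/-!
For a finite chain `s` in a finite lattice, `supBelow s x` is the largest element of `s ∪ {⊥}`
below `x`; it is monotone in `x` and, because `s ∪ {⊥}` is a chain, it preserves meets. If every
join-irreducible lies in `U ∪ V`, then `x` is the join of the join-irreducibles below it, hence
`x = supBelow U x ⊔ supBelow V x`, so `x ↦ (supBelow U x, supBelow V x)` reflects the order.
The finite chains `U ∪ {⊥}` and `V ∪ {⊥}` are then replaced by their copies inside some `Fin n`.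
-/

section Chain

variable {α : Type*}

theorem IsChain.sup_mem [Lattice α] {s : Set α} (hs : IsChain (· ≤ ·) s) {a b : α}
    (ha : a ∈ s) (hb : b ∈ s) : a ⊔ b ∈ s := by
  rcases hs.total ha hb with h | h
  · rwa [sup_eq_right.2 h]
  · rwa [sup_eq_left.2 h]

theorem IsChain.inf_mem [Lattice α] {s : Set α} (hs : IsChain (· ≤ ·) s) {a b : α}
    (ha : a ∈ s) (hb : b ∈ s) : a ⊓ b ∈ s := by
  rcases hs.total ha hb with h | h
  · rwa [inf_eq_left.2 h]
  · rwa [inf_eq_right.2 h]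

theorem IsChain.exists_fin_le_iff [PartialOrder α] {s : Set α} (hs : IsChain (· ≤ ·) s)
    (hfin : s.Finite) : ∃ (n : ℕ) (g : α → Fin n), ∀ a ∈ s, ∀ b ∈ s, g a ≤ g b ↔ a ≤ b := by
  classical
  let _ : LinearOrder s := hs.linearOrder
  have := hfin.fintype
  let e := (Fintype.orderIsoFinOfCardEq s rfl).symm
  -- one extra value, `0`, for the points outside `s`, so that `Fin` is inhabited even if `s = ∅`
  refine ⟨Fintype.card s + 1, fun a => if ha : a ∈ s then (e ⟨a, ha⟩).castSucc else 0,
    fun a ha b hb => ?_⟩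
  simp only [dif_pos ha, dif_pos hb, Fin.castSucc_le_castSucc_iff, e.le_iff_le]
  rfl

theorem IsChain.map_inf_eq_min [Lattice α] {β : Type*} [LinearOrder β] {s : Set α}
    (hs : IsChain (· ≤ ·) s) {g : α → β} (hg : ∀ a ∈ s, ∀ b ∈ s, g a ≤ g b ↔ a ≤ b)
    {a b : α} (ha : a ∈ s) (hb : b ∈ s) : g (a ⊓ b) = min (g a) (g b) := by
  rcases hs.total ha hb with h | h
  · rw [inf_eq_left.2 h, min_eq_left ((hg a ha b hb).2 h)]
  · rw [inf_eq_right.2 h, min_eq_right ((hg b hb a ha).2 h)]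

end Chain

section SupBelow

variable {L : Type*} [Lattice L] [OrderBot L] [Finite L]

noncomputable def supBelow (s : Set L) (x : L) : L :=
  {b | b ∈ s ∧ b ≤ x}.toFinite.toFinset.sup id

variable {s t : Set L} {x y b : L}

theorem supBelow_le : supBelow s x ≤ x :=
  Finset.sup_le fun _ hb => ((Set.Finite.mem_toFinset _).1 hb).2

theorem le_supBelow (hb : b ∈ s) (hbx : b ≤ x) : b ≤ supBelow s x :=
  Finset.le_sup (f := id) ((Set.Finite.mem_toFinset _).2 ⟨hb, hbx⟩)

theorem supBelow_mono (s : Set L) : Monotone (supBelow s) := fun _ _ hxy =>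
  Finset.sup_le fun _ hb =>
    have hb := (Set.Finite.mem_toFinset _).1 hb
    le_supBelow hb.1 (hb.2.trans hxy)

theorem IsChain.supBelow_mem (hs : IsChain (· ≤ ·) (insert ⊥ s)) : supBelow s x ∈ insert ⊥ s :=
  Finset.sup_mem _ (Set.mem_insert _ _) (fun _ ha _ hb => hs.sup_mem ha hb) _ _
    fun _ hb => Set.mem_insert_of_mem _ ((Set.Finite.mem_toFinset _).1 hb).1

theorem IsChain.supBelow_inf (hs : IsChain (· ≤ ·) (insert ⊥ s)) :
    supBelow s (x ⊓ y) = supBelow s x ⊓ supBelow s y := by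
  refine le_antisymm (le_inf (supBelow_mono s inf_le_left) (supBelow_mono s inf_le_right)) ?_
  rcases hs.inf_mem hs.supBelow_mem hs.supBelow_mem with h | h
  · exact h ▸ bot_le
  · exact le_supBelow h (inf_le_inf supBelow_le supBelow_le)

theorem le_supBelow_sup_supBelow (h : {a : L | SupIrred a} ⊆ s ∪ t) (x : L) :
    x ≤ supBelow s x ⊔ supBelow t x := by
  obtain ⟨d, rfl, hd⟩ := exists_supIrred_decomposition x
  refine Finset.sup_le fun b hb => ?_
  have hbx : b ≤ d.sup id := Finset.le_sup (f := id) hb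
  rcases h (hd hb) with hbs | hbt
  · exact le_sup_of_le_left (le_supBelow hbs hbx)
  · exact le_sup_of_le_right (le_supBelow hbt hbx)

theorem le_iff_supBelow_le_and_supBelow_le (h : {a : L | SupIrred a} ⊆ s ∪ t) :
    x ≤ y ↔ supBelow s x ≤ supBelow s y ∧ supBelow t x ≤ supBelow t y :=
  ⟨fun hxy => ⟨supBelow_mono s hxy, supBelow_mono t hxy⟩, fun ⟨hs, ht⟩ =>
    calc x ≤ supBelow s x ⊔ supBelow t x := le_supBelow_sup_supBelow h x
      _ ≤ supBelow s y ⊔ supBelow t y := sup_le_sup hs ht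
      _ ≤ y := sup_le supBelow_le supBelow_le⟩

end SupBelow

/-- A finite slim lattice admits an order-embedding into the direct product of two finite
chains that preserves meets (the product being ordered componentwise, and the meet in the
product being the componentwise minimum). -/
theorem stmt_6 {L : Type*} [Lattice L] [Fintype L] [OrderBot L] (U V : Set L)
    (hU : IsChain (· ≤ ·) U) (hV : IsChain (· ≤ ·) V)
    (hJ : {a : L | SupIrred a} = U ∪ V) :
    ∃ (α β : Type) (la : LinearOrder α) (lb : LinearOrder β),
      Finite α ∧ Finite β ∧
      ∃ f : L → α × β,
        (∀ x y : L, x ≤ y ↔ (la.le (f x).1 (f y).1 ∧ lb.le (f x).2 (f y).2)) ∧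
        (∀ x y : L, f (x ⊓ y) = (la.min (f x).1 (f y).1, lb.min (f x).2 (f y).2)) := by
  have hU' : IsChain (· ≤ ·) (insert ⊥ U) := hU.insert fun _ _ _ => Or.inl bot_le
  have hV' : IsChain (· ≤ ·) (insert ⊥ V) := hV.insert fun _ _ _ => Or.inl bot_le
  obtain ⟨m, g, hg⟩ := hU'.exists_fin_le_iff (Set.toFinite _)
  obtain ⟨n, h, hh⟩ := hV'.exists_fin_le_iff (Set.toFinite _)
  refine ⟨Fin m, Fin n, inferInstance, inferInstance, inferInstance, inferInstance,
    fun x => (g (supBelow U x), h (supBelow V x)), fun x y => ?_, fun x y => ?_⟩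
  · rw [le_iff_supBelow_le_and_supBelow_le hJ.le,
      hg _ hU'.supBelow_mem _ hU'.supBelow_mem, hh _ hV'.supBelow_mem _ hV'.supBelow_mem]
  · dsimp only
    rw [hU'.supBelow_inf, hV'.supBelow_inf,
      hU'.map_inf_eq_min hg hU'.supBelow_mem hU'.supBelow_mem,
      hV'.map_inf_eq_min hh hV'.supBelow_mem hV'.supBelow_mem]
end

section
/- Let L be a finite slim lattice with Jir(L) the union of two disjoint nonempty chains U and V, and suppose L is not a chain. Then for any two incomparable a, b ∈ L, exactly one of the following holds: u(a) < u(b) and v(b) < v(a), or u(b) < u(a) and v(a) < v(b). -/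
/-!
Every element of a finite lattice is the join of the join-irreducibles below it, and each of
those lies below `u x` or `v x`; hence `x ≤ y ↔ u x ≤ u y ∧ v x ≤ v y`. The values of `u` (and
of `v`) lie in a chain, so for incomparable `a`, `b` the pairs `(u a, u b)` and `(v a, v b)` are
each comparable, and incomparability of `a`, `b` forces them to be strictly ordered in
opposite directions.
-/

def IsLowerProjection {L : Type*} [Preorder L] (S : Set L) (f : L → L) : Prop :=
  ∀ x, f x ∈ S ∧ f x ≤ x ∧ ∀ w ∈ S, w ≤ x → w ≤ f x

namespace IsLowerProjection

variable {L : Type*}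

theorem monotone [Preorder L] {S : Set L} {f : L → L} (hf : IsLowerProjection S f) :
    Monotone f := fun _ y hxy =>
  (hf y).2.2 _ (hf _).1 ((hf _).2.1.trans hxy)

variable [Lattice L] [OrderBot L] [WellFoundedLT L] {S T : Set L} {f g : L → L}

theorem le_sup (hf : IsLowerProjection S f) (hg : IsLowerProjection T g)
    (hJ : {a : L | SupIrred a} ⊆ S ∪ T) (x : L) : x ≤ f x ⊔ g x := by
  obtain ⟨s, hsx, hs⟩ := exists_supIrred_decomposition x
  conv_lhs => rw [← hsx]
  refine Finset.sup_le fun b hb => ?_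
  have hbx : b ≤ x := hsx ▸ Finset.le_sup (f := id) hb
  rcases hJ (hs hb) with hbS | hbT
  · exact le_sup_of_le_left ((hf x).2.2 b hbS hbx)
  · exact le_sup_of_le_right ((hg x).2.2 b hbT hbx)

theorem le_iff_le_and_le (hf : IsLowerProjection S f) (hg : IsLowerProjection T g)
    (hJ : {a : L | SupIrred a} ⊆ S ∪ T) {x y : L} : x ≤ y ↔ f x ≤ f y ∧ g x ≤ g y :=
  ⟨fun hxy => ⟨hf.monotone hxy, hg.monotone hxy⟩, fun ⟨hfxy, hgxy⟩ =>
    (hf.le_sup hg hJ x).trans (sup_le (hfxy.trans (hf y).2.1) (hgxy.trans (hg y).2.1))⟩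

end IsLowerProjection

theorem xor_lt_of_total_of_not_le {α : Type*} [Preorder α] {p q r s : α}
    (hpq : p ≤ q ∨ q ≤ p) (hrs : r ≤ s ∨ s ≤ r)
    (h₁ : ¬ (p ≤ q ∧ r ≤ s)) (h₂ : ¬ (q ≤ p ∧ s ≤ r)) :
    Xor (p < q ∧ s < r) (q < p ∧ r < s) := by
  simp only [Xor, lt_iff_le_not_ge]
  tauto

theorem stmt_12_general {L : Type*} [Lattice L] [Fintype L] [OrderBot L] (U V : Set L)
    (hU : IsChain (· ≤ ·) U) (hV : IsChain (· ≤ ·) V)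
    (hJ : {a : L | SupIrred a} = U ∪ V)
    (u v : L → L)
    (hu : ∀ x : L, u x ∈ insert (⊥ : L) U ∧ u x ≤ x ∧
      ∀ w ∈ insert (⊥ : L) U, w ≤ x → w ≤ u x)
    (hv : ∀ x : L, v x ∈ insert (⊥ : L) V ∧ v x ≤ x ∧
      ∀ w ∈ insert (⊥ : L) V, w ≤ x → w ≤ v x)
    (a b : L) (hab : ¬ a ≤ b) (hba : ¬ b ≤ a) :
    Xor' (u a < u b ∧ v b < v a) (u b < u a ∧ v a < v b) := by
  have hJ' : {a : L | SupIrred a} ⊆ insert ⊥ U ∪ insert ⊥ V :=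
    hJ.le.trans (Set.union_subset_union (Set.subset_insert _ _) (Set.subset_insert _ _))
  have hle {x y : L} : x ≤ y ↔ u x ≤ u y ∧ v x ≤ v y :=
    IsLowerProjection.le_iff_le_and_le hu hv hJ'
  have hUbot : IsChain (· ≤ ·) (insert ⊥ U) := hU.insert fun _ _ _ => Or.inl bot_le
  have hVbot : IsChain (· ≤ ·) (insert ⊥ V) := hV.insert fun _ _ _ => Or.inl bot_le
  exact xor_lt_of_total_of_not_le (hUbot.total (hu a).1 (hu b).1) (hVbot.total (hv a).1 (hv b).1)
    (hle.not.mp hab) (hle.not.mp hba)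

/-- In a finite slim lattice with `Jir L` the union of two disjoint nonempty chains `U`, `V`,
which is not a chain, for any incomparable `a`, `b` exactly one of the following holds:
`u a < u b ∧ v b < v a`, or `u b < u a ∧ v a < v b`. -/
theorem stmt_12 {L : Type*} [Lattice L] [Fintype L] [OrderBot L] (U V : Set L)
    (hU : IsChain (· ≤ ·) U) (hV : IsChain (· ≤ ·) V)
    (hUne : U.Nonempty) (hVne : V.Nonempty) (hUV : Disjoint U V)
    (hJ : {a : L | SupIrred a} = U ∪ V)
    (hnc : ¬ IsChain (· ≤ ·) (Set.univ : Set L))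
    (u v : L → L)
    (hu : ∀ x : L, u x ∈ insert (⊥ : L) U ∧ u x ≤ x ∧
      ∀ w ∈ insert (⊥ : L) U, w ≤ x → w ≤ u x)
    (hv : ∀ x : L, v x ∈ insert (⊥ : L) V ∧ v x ≤ x ∧
      ∀ w ∈ insert (⊥ : L) V, w ≤ x → w ≤ v x)
    (a b : L) (hab : ¬ a ≤ b) (hba : ¬ b ≤ a) :
    Xor' (u a < u b ∧ v b < v a) (u b < u a ∧ v a < v b) :=
  stmt_12_general U V hU hV hJ u v hu hv a b hab hba
end

section
/- Let K be the eight-element lattice with elements a < x, a < b ≤ y ≤ z, b ≤ t ≤ c, x ∨ b = y, x ∧ t = a, z ∧ t = b, z ∧ c = y, z ∨ t = d = top, where [a,b], [b,z], [y,c] are the constituent chains (the lattice of property P(8,1)). If L is a finite slim semimodular lattice, S a retract of L, and g : K → L a lattice embedding with g(a), g(b), g(c), g(d) ∈ S, then g(y) ∈ S. -/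
/-!
If the join-irreducibles of a finite lattice lie in two chains `U` and `V`, counting the elements
of each chain below `s` gives meet-homomorphisms `σ, τ : L → ℕ` that jointly reflect the order,
i.e. a meet-embedding of `L` into a product of two chains. Orient it so that `σ b < σ x` and
`τ x < τ b`. Chasing coordinates through the meets of the copy of `K` shows that `y = z ⊓ c` is the
element with coordinates `(σ c, τ b)`. The retraction sends `x, z, t` to elements `u, v, w` with
the same meets and joins over the fixed `a, b, c, d`, and `f y = v ⊓ c`. The same chase shows that
`v ⊓ c` again has coordinates `(σ c, τ b)`: the degenerate alternatives `u = a`, `w = b` and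
`v ≤ c` would force `d ≤ c` or `τ c ≤ τ b`.
-/

open Finset

section ChainRank

variable {L : Type*} [Lattice L] [Fintype L] {U V : Set L} {p q : L}

open Classical in
noncomputable def chainBelow (U : Set L) (s : L) : Finset L := {j | j ∈ U ∧ j ≤ s}

theorem mem_chainBelow {j s : L} : j ∈ chainBelow U s ↔ j ∈ U ∧ j ≤ s := by
  simp [chainBelow]

theorem chainBelow_inf [DecidableEq L] (U : Set L) (p q : L) :
    chainBelow U (p ⊓ q) = chainBelow U p ∩ chainBelow U q := by
  ext j
  simp only [mem_inter, mem_chainBelow, le_inf_iff]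
  tauto

theorem IsChain.chainBelow_total (hU : IsChain (· ≤ ·) U) (p q : L) :
    chainBelow U p ⊆ chainBelow U q ∨ chainBelow U q ⊆ chainBelow U p := by
  by_contra! h
  obtain ⟨j, hjp, hjq⟩ := not_subset.1 h.1
  obtain ⟨k, hkq, hkp⟩ := not_subset.1 h.2
  rw [mem_chainBelow] at hjp hjq hkq hkp
  rcases hU.total hjp.1 hkq.1 with hjk | hkj
  · exact hjq ⟨hjp.1, hjk.trans hkq.2⟩
  · exact hkp ⟨hkq.1, hkj.trans hjp.2⟩

theorem IsChain.chainBelow_subset_of_card_le (hU : IsChain (· ≤ ·) U)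
    (h : #(chainBelow U p) ≤ #(chainBelow U q)) : chainBelow U p ⊆ chainBelow U q :=
  (hU.chainBelow_total p q).elim id fun hqp => (eq_of_subset_of_card_le hqp h).ge

noncomputable def IsChain.rankInfHom (hU : IsChain (· ≤ ·) U) : InfHom L ℕ where
  toFun s := #(chainBelow U s)
  map_inf' p q := by
    classical
    rw [chainBelow_inf]
    rcases hU.chainBelow_total p q with h | h
    · rw [inter_eq_left.2 h, inf_of_le_left (card_le_card h)]
    · rw [inter_eq_right.2 h, inf_of_le_right (card_le_card h)]

theorem le_of_chainBelow_subset [OrderBot L] (hJ : {j : L | SupIrred j} ⊆ U ∪ V)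
    (hU : chainBelow U p ⊆ chainBelow U q) (hV : chainBelow V p ⊆ chainBelow V q) :
    p ≤ q := by
  obtain ⟨F, rfl, hF⟩ := exists_supIrred_decomposition p
  refine Finset.sup_le fun j hj => ?_
  have hjp : j ≤ F.sup id := le_sup (f := id) hj
  rcases hJ (hF hj) with hjU | hjV
  · exact (mem_chainBelow.1 (hU (mem_chainBelow.2 ⟨hjU, hjp⟩))).2
  · exact (mem_chainBelow.1 (hV (mem_chainBelow.2 ⟨hjV, hjp⟩))).2

theorem le_of_rankInfHom_le [OrderBot L] (hJ : {j : L | SupIrred j} ⊆ U ∪ V)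
    (hU : IsChain (· ≤ ·) U) (hV : IsChain (· ≤ ·) V)
    (hσ : hU.rankInfHom p ≤ hU.rankInfHom q) (hτ : hV.rankInfHom p ≤ hV.rankInfHom q) :
    p ≤ q :=
  le_of_chainBelow_subset hJ (hU.chainBelow_subset_of_card_le hσ)
    (hV.chainBelow_subset_of_card_le hτ)

end ChainRank

section ProductOfChains

variable {L α β : Type*} [Lattice L] [LinearOrder α] [LinearOrder β]

theorem InfHom.map_eq_of_inf_eq_of_lt (σ : InfHom L α) {p q r : L} (h : p ⊓ q = r)
    (hr : σ r < σ q) : σ p = σ r := by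
  rw [← h, map_inf] at hr ⊢
  exact (inf_of_le_left (not_le.1 (inf_lt_right.1 hr)).le).symm

variable (σ : InfHom L α) (τ : InfHom L β)

theorem eq_of_map_eq_of_map_eq (hφ : ∀ p q, σ p ≤ σ q → τ p ≤ τ q → p ≤ q) {p q : L}
    (hσ : σ p = σ q) (hτ : τ p = τ q) : p = q :=
  le_antisymm (hφ p q hσ.le hτ.le) (hφ q p hσ.ge hτ.ge)

theorem lt_or_lt_of_not_le (hφ : ∀ p q, σ p ≤ σ q → τ p ≤ τ q → p ≤ q) {p q : L}
    (h : ¬ p ≤ q) : σ q < σ p ∨ τ q < τ p := by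
  by_contra! h'
  exact h (hφ p q h'.1 h'.2)

theorem map_corner_of_config (hφ : ∀ p q, σ p ≤ σ q → τ p ≤ τ q → p ≤ q)
    {a b c d x y z t : L} (hxb : x ⊓ b = a) (hxt : x ⊓ t = a) (hxt' : x ⊔ t = c)
    (hzt : z ⊓ t = b) (hzc : z ⊓ c = y) (hzt' : z ⊔ t = d) (hcd : c < d) (htb : t ≠ b)
    (hσx : σ b < σ x) (hτx : τ x < τ b) :
    σ a = σ b ∧ τ a < τ b ∧ σ b < σ c ∧ τ b < τ c ∧ σ y = σ c ∧ τ y = τ b := by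
  have hσa : σ a = σ b := by rw [← hxb, map_inf, inf_of_le_right hσx.le]
  have hτa : τ a = τ x := by rw [← hxb, map_inf, inf_of_le_left hτx.le]
  have hσt : σ t = σ b := by
    rw [← hσa]; exact σ.map_eq_of_inf_eq_of_lt (inf_comm x t ▸ hxt) (hσa ▸ hσx)
  have hbt : b ≤ t := hzt ▸ inf_le_right
  have hτt : τ b < τ t := lt_of_not_ge fun h => htb (le_antisymm (hφ _ _ hσt.le h) hbt)
  have hτz : τ z = τ b := τ.map_eq_of_inf_eq_of_lt hzt hτt
  have hσc : σ b < σ c := hσx.trans_le (OrderHomClass.mono σ (hxt' ▸ le_sup_left))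
  have hτc : τ b < τ c := hτt.trans_le (OrderHomClass.mono τ (hxt' ▸ le_sup_right))
  have hzc' : ¬ z ≤ c := fun h => hcd.not_ge (hzt' ▸ sup_le h (hxt' ▸ le_sup_right))
  have hσz : σ c < σ z :=
    (lt_or_lt_of_not_le σ τ hφ hzc').resolve_right (hτz ▸ hτc).not_gt
  refine ⟨hσa, hτa ▸ hτx, hσc, hτc, ?_, ?_⟩
  · rw [← hzc, map_inf, inf_of_le_right hσz.le]
  · rw [← hzc, map_inf, hτz, inf_of_le_left hτc.le]

theorem inf_eq_corner (hφ : ∀ p q, σ p ≤ σ q → τ p ≤ τ q → p ≤ q)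
    {a b c d y u v w : L} (hσa : σ a = σ b) (hτa : τ a < τ b) (hσc : σ b < σ c)
    (hτc : τ b < τ c) (hσy : σ y = σ c) (hτy : τ y = τ b) (hcd : c < d)
    (hub : u ⊓ b = a) (huw : u ⊓ w = a) (huw' : u ⊔ w = c) (hvw : v ⊓ w = b)
    (hvw' : v ⊔ w = d) :
    v ⊓ c = y := by
  have hwc : w ≤ c := huw' ▸ le_sup_right
  have hvc : ¬ v ≤ c := fun h => hcd.not_ge (hvw' ▸ sup_le h hwc)
  have hτu : τ u = τ a := τ.map_eq_of_inf_eq_of_lt hub hτa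
  have hσuw : σ u ⊓ σ w = σ b := by rw [← map_inf, huw, hσa]
  rcases le_total (σ u) (σ w) with hσuw' | hσuw'
  · -- then `u = a`, so `w = c` and `v ⊓ c = b`, which forces `v ≤ c`
    have hua : u = a :=
      eq_of_map_eq_of_map_eq σ τ hφ (by rw [← inf_of_le_left hσuw', hσuw, hσa]) hτu
    have hvc' : v ⊓ c = b := by
      rwa [← huw', sup_of_le_right (hua ▸ huw ▸ inf_le_right : u ≤ w)]
    refine absurd (hφ v c ?_ ?_) hvc
    · exact (σ.map_eq_of_inf_eq_of_lt hvc' hσc).trans_le hσc.le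
    · exact (τ.map_eq_of_inf_eq_of_lt hvc' hτc).trans_le hτc.le
  have hσw : σ w = σ b := by rw [← hσuw, inf_of_le_right hσuw']
  rcases (OrderHomClass.mono τ (hvw ▸ inf_le_right : b ≤ w)).eq_or_lt with hτw | hτw
  · -- then `w = b`, so `c = u ⊔ b ≤ y`
    have hwb : w = b := eq_of_map_eq_of_map_eq σ τ hφ hσw hτw.symm
    have hcy : c ≤ y := by
      rw [← huw', hwb]
      refine sup_le (hφ _ _ ?_ ?_) (hφ _ _ ?_ ?_)
      · exact hσy ▸ OrderHomClass.mono σ (huw' ▸ le_sup_left)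
      · exact hτy ▸ hτu ▸ hτa.le
      · exact hσy ▸ hσc.le
      · exact hτy.ge
    exact absurd (hτy ▸ OrderHomClass.mono τ hcy) hτc.not_ge
  have hτv : τ v = τ b := τ.map_eq_of_inf_eq_of_lt hvw hτw
  have hσv : σ c < σ v :=
    (lt_or_lt_of_not_le σ τ hφ hvc).resolve_right (hτv ▸ hτc).not_gt
  refine eq_of_map_eq_of_map_eq σ τ hφ ?_ ?_
  · rw [map_inf, inf_of_le_right hσv.le, hσy]
  · rw [map_inf, hτv, inf_of_le_left hτc.le, hτy]

theorem inf_eq_of_config_of_config (hφ : ∀ p q, σ p ≤ σ q → τ p ≤ τ q → p ≤ q)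
    {a b c d x y z t u v w : L} (hnxb : ¬ x ≤ b) (hnbx : ¬ b ≤ x) (hcd : c < d) (htb : t ≠ b)
    (hxb' : x ⊓ b = a) (hxt : x ⊓ t = a) (hxt' : x ⊔ t = c) (hzt : z ⊓ t = b)
    (hzc : z ⊓ c = y) (hzt' : z ⊔ t = d)
    (hub : u ⊓ b = a) (huw : u ⊓ w = a) (huw' : u ⊔ w = c) (hvw : v ⊓ w = b)
    (hvw' : v ⊔ w = d) :
    v ⊓ c = y := by
  rcases lt_or_lt_of_not_le σ τ hφ hnxb with hσ | hτ <;>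
    rcases lt_or_lt_of_not_le σ τ hφ hnbx with hσ' | hτ'
  · exact absurd hσ hσ'.not_gt
  · obtain ⟨hσa, hτa, hσc, hτc, hσy, hτy⟩ :=
      map_corner_of_config σ τ hφ hxb' hxt hxt' hzt hzc hzt' hcd htb hσ hτ'
    exact inf_eq_corner σ τ hφ hσa hτa hσc hτc hσy hτy hcd hub huw huw' hvw hvw'
  · have hφ' : ∀ p q, τ p ≤ τ q → σ p ≤ σ q → p ≤ q := fun p q h h' => hφ p q h' h
    obtain ⟨hτa, hσa, hτc, hσc, hτy, hσy⟩ :=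
      map_corner_of_config τ σ hφ' hxb' hxt hxt' hzt hzc hzt' hcd htb hτ hσ'
    exact inf_eq_corner τ σ hφ' hτa hσa hτc hσc hτy hσy hcd hub huw huw' hvw hvw'
  · exact absurd hτ hτ'.not_gt

end ProductOfChains

theorem stmt_16_general {L : Type*} [Lattice L] [Fintype L] [OrderBot L] (U V : Set L)
    (hU : IsChain (· ≤ ·) U) (hV : IsChain (· ≤ ·) V)
    (hJ : {a : L | SupIrred a} = U ∪ V)
    (f : L → L)
    (hmeet : ∀ p q : L, f (p ⊓ q) = f p ⊓ f q)
    (hjoin : ∀ p q : L, f (p ⊔ q) = f p ⊔ f q)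
    (a b c d x y z t : L)
    (hnodup : List.Nodup [a, b, c, d, x, y, z, t])
    (h1 : a < x) (h2 : a < b)
    (h8 : x ⊓ b = a) (h9 : x ⊓ t = a) (h10 : x ⊔ t = c)
    (h11 : z ⊓ t = b) (h12 : z ⊓ c = y) (h13 : z ⊔ t = d) (h14 : c < d)
    (hfa : f a = a) (hfb : f b = b) (hfc : f c = c) (hfd : f d = d) :
    f y = y := by
  have htb : t ≠ b := by rintro rfl; simp at hnodup
  have hnxb : ¬ x ≤ b := fun h => h1.ne' (h8 ▸ (inf_of_le_left h).symm)
  have hnbx : ¬ b ≤ x := fun h => h2.ne' (h8 ▸ (inf_of_le_right h).symm)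
  have hub : f x ⊓ b = a := by rw [← hfb, ← hmeet, h8, hfa]
  have huw : f x ⊓ f t = a := by rw [← hmeet, h9, hfa]
  have huw' : f x ⊔ f t = c := by rw [← hjoin, h10, hfc]
  have hvw : f z ⊓ f t = b := by rw [← hmeet, h11, hfb]
  have hvw' : f z ⊔ f t = d := by rw [← hjoin, h13, hfd]
  calc f y = f z ⊓ c := by rw [← h12, hmeet, hfc]
    _ = y := inf_eq_of_config_of_config hU.rankInfHom hV.rankInfHom
      (fun p q => le_of_rankInfHom_le hJ.subset hU hV) hnxb hnbx h14 htb h8 h9 h10 h11 h12 h13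
      hub huw huw' hvw hvw'

/-- Property `P(8,1)`: let `L` be a finite slim semimodular lattice, `f` a retraction of `L`
with retract `S = f(L)`, and let `a, b, c, d, x, y, z, t` be the (pairwise distinct) images
of the eight elements of the lattice `K` of property `P(8,1)` under a lattice embedding
`g : K → L`, so that `a < x`, `a < b ≤ y ≤ z`, `b ≤ t ≤ c`, `x ⊔ b = y`, `x ⊓ b = a`,
`x ⊓ t = a`, `x ⊔ t = c`, `z ⊓ t = b`, `z ⊓ c = y`, `z ⊔ t = d`, `c < d`, `z < d`.
If `a, b, c, d` belong to `S`, then `y ∈ S`. -/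
theorem stmt_16 {L : Type*} [Lattice L] [Fintype L] [OrderBot L] (U V : Set L)
    (hU : IsChain (· ≤ ·) U) (hV : IsChain (· ≤ ·) V)
    (hJ : {a : L | SupIrred a} = U ∪ V)
    (hsm : ∀ p q : L, p ⊓ q ⋖ p → q ⋖ p ⊔ q)
    (f : L → L)
    (hmeet : ∀ p q : L, f (p ⊓ q) = f p ⊓ f q)
    (hjoin : ∀ p q : L, f (p ⊔ q) = f p ⊔ f q)
    (hidem : ∀ p : L, f (f p) = f p)
    (a b c d x y z t : L)
    (hnodup : List.Nodup [a, b, c, d, x, y, z, t])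
    (h1 : a < x) (h2 : a < b) (h3 : b ≤ y) (h4 : y ≤ z) (h5 : b ≤ t) (h6 : t ≤ c)
    (h7 : x ⊔ b = y) (h8 : x ⊓ b = a) (h9 : x ⊓ t = a) (h10 : x ⊔ t = c)
    (h11 : z ⊓ t = b) (h12 : z ⊓ c = y) (h13 : z ⊔ t = d) (h14 : c < d) (h15 : z < d)
    (hfa : f a = a) (hfb : f b = b) (hfc : f c = c) (hfd : f d = d) :
    f y = y :=
  stmt_16_general U V hU hV hJ f hmeet hjoin a b c d x y z t hnodup h1 h2 h8 h9 h10 h11 h12 h13 h14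
    hfa hfb hfc hfd
end
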